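/- arXiv:2211.14704 — 2 statements merged into one kernel-verified Lean document; each statement's English description precedes it below -/
import Mathlib

section
/- For n ≥ 2, let H_n be the graph obtained from the n-cube Q_n by attaching a one-way infinite path q_1, q_2, … at the vertex ∅ (the all-zeros vertex). Then the smallest closed A(H_n)-invariant subspace of ℓ²(V(H_n)) containing e_∅ equals the closed linear span of {𝟙_{W_d} : 0 ≤ d ≤ n} ∪ {e_{q_j} : j ≥ 1}, where W_d is the set of subsets of [n] of cardinality d and 𝟙_{W_d} = Σ_{|S|=d} e_S. -/
noncomputable section

/-- Vertices of the graph `H_n` obtained from the `n`-cube `Q_n` (vertices: subsets of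
`[n]`, modelled as `Finset (Fin n)`) by attaching a one-way infinite path at `∅`:
`Sum.inl S` is the cube vertex `S` and `Sum.inr j` is the tail vertex `q_{j+1}`. -/
abbrev CubeTailV (n : ℕ) := Finset (Fin n) ⊕ ℕ

/-- Adjacency in `H_n`: two subsets are adjacent exactly when their symmetric difference
has one element; the edge `∅ q_1`; and the path edges `q_j q_{j+1}` for `j ≥ 1`. -/
def cubeTailAdj (n : ℕ) (x y : CubeTailV n) : Prop :=
  (∃ S T : Finset (Fin n), (symmDiff S T).card = 1 ∧ x = Sum.inl S ∧ y = Sum.inl T) ∨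
  ((x = Sum.inl (∅ : Finset (Fin n)) ∧ y = Sum.inr 0) ∨
    (y = Sum.inl (∅ : Finset (Fin n)) ∧ x = Sum.inr 0)) ∨
  (∃ j : ℕ, (x = Sum.inr j ∧ y = Sum.inr (j + 1)) ∨ (y = Sum.inr j ∧ x = Sum.inr (j + 1)))

/-- The Hilbert space `ℓ²(V(H_n))`. -/
abbrev cubeTailSpace (n : ℕ) := lp (fun _ : CubeTailV n => ℂ) 2

/-- The standard orthonormal basis vector `e_w` of `ℓ²(V(H_n))`. -/
def stdVec {n : ℕ} (w : CubeTailV n) : cubeTailSpace n := lp.single 2 w 1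

open scoped Classical

/-!
The closed span `K` of the level indicators `𝟙_{W_d}` and the tail vectors `e_{q_j}` contains
`e_∅`, and `A` maps each of these vectors into their span, so `K` is invariant. For minimality,
let `K'` be closed, invariant and contain `e_∅`. As `A` is self-adjoint, `K ⊓ (K ⊓ K')ᗮ` is an
invariant subspace of `K` orthogonal to `e_∅`, and it suffices to show that every such subspace
`W` is zero. A vector of `W` that vanishes on the cube also vanishes on the tail (apply `A` to
push the zero at `∅` along the path), so `W` embeds into the functions on the cube and is
finite-dimensional; if nonzero, it contains an eigenvector `φ`, `Aφ = μφ`. On the tail `φ` solves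
`φ(q_{j-1}) + φ(q_{j+1}) = μ φ(q_j)` (where `q_0 := ∅`, at which `φ` vanishes) and tends to
zero, which forces `φ(q_1) = 0`. Then, level by level, the eigen-equation at a set of size `d`
shows that `φ` vanishes on the sets of size `d + 1`; so `φ` vanishes on the cube, hence
everywhere.
-/

open Filter Topology Module End

theorem Finset.singleton_symmDiff_of_mem {α : Type*} [DecidableEq α] {s : Finset α} {a : α}
    (h : a ∈ s) : symmDiff {a} s = s.erase a := by
  ext b; by_cases hb : b = a <;> simp [Finset.mem_symmDiff, hb, h]

theorem Finset.singleton_symmDiff_of_notMem {α : Type*} [DecidableEq α] {s : Finset α} {a : α}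
    (h : a ∉ s) : symmDiff {a} s = insert a s := by
  ext b; by_cases hb : b = a <;> simp [Finset.mem_symmDiff, hb, h]

theorem Finset.card_symmDiff_eq_one_iff {α : Type*} [DecidableEq α] (s t : Finset α) :
    (symmDiff s t).card = 1 ↔ ∃ a, s = symmDiff {a} t := by
  rw [Finset.card_eq_one]
  refine exists_congr fun a => ⟨fun h => ?_, fun h => ?_⟩
  · rw [← h, symmDiff_symmDiff_cancel_right]
  · rw [h, symmDiff_symmDiff_cancel_right]

theorem eq_zero_of_recurrence_of_tendsto_zero {𝕜 : Type*} [NormedField 𝕜] {a : ℕ → 𝕜} {t : 𝕜}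
    (h₁ : a 1 = t * a 0) (hrec : ∀ j, a j + a (j + 2) = t * a (j + 1))
    (ha : Tendsto a atTop (𝓝 0)) : a 0 = 0 := by
  -- the discrete Wronskian `a (j+1)² + a j² - t a (j+1) a j` of the recurrence is conserved
  set Q : ℕ → 𝕜 := fun j => a (j + 1) ^ 2 + a j ^ 2 - t * a (j + 1) * a j
  have hQ : ∀ j, Q j = a 0 ^ 2 := by
    intro j
    induction j with
    | zero => simp only [Q, zero_add, h₁]; ring
    | succ j ih =>
      rw [← ih]
      simp only [Q, show a (j + 1 + 1) = t * a (j + 1) - a j by rw [← hrec j]; ring]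
      ring
  have hQ0 : Tendsto Q atTop (𝓝 0) := by
    have h := ((ha.comp (tendsto_add_atTop_nat 1)).pow 2).add (ha.pow 2) |>.sub
      ((tendsto_const_nhds (x := t)).mul (ha.comp (tendsto_add_atTop_nat 1)) |>.mul ha)
    simpa using h
  rw [show Q = fun _ => a 0 ^ 2 from funext hQ] at hQ0
  exact pow_eq_zero_iff (n := 2) (by norm_num) |>.mp (tendsto_nhds_unique tendsto_const_nhds hQ0)

theorem lp.tendsto_cofinite_zero {α E : Type*} [NormedAddCommGroup E] {p : ENNReal}
    (hp : 0 < p.toReal) (f : lp (fun _ : α => E) p) : Tendsto (⇑f) cofinite (𝓝 0) := by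
  have hs := ((lp.memℓp f).summable hp).tendsto_cofinite_zero.rpow_const (p := p.toReal⁻¹)
    (Or.inr (inv_nonneg.mpr hp.le))
  rw [tendsto_zero_iff_norm_tendsto_zero]
  simpa [Real.rpow_rpow_inv (norm_nonneg _) hp.ne', Real.zero_rpow (inv_ne_zero hp.ne')] using hs

theorem IsSelfAdjoint.le_of_forall_invtSubmodule_eq_bot {𝕜 E : Type*} [RCLike 𝕜]
    [NormedAddCommGroup E] [InnerProductSpace 𝕜 E] [CompleteSpace E] {T : E →L[𝕜] E}
    (hT : IsSelfAdjoint T)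
    {K K' : Submodule 𝕜 E} {v : E} (hK : IsClosed (K : Set E))
    (hKT : K ∈ invtSubmodule T.toLinearMap) (hK' : IsClosed (K' : Set E))
    (hK'T : K' ∈ invtSubmodule T.toLinearMap) (hvK : v ∈ K) (hvK' : v ∈ K')
    (h : ∀ W ∈ invtSubmodule T.toLinearMap, W ≤ K → (∀ w ∈ W, inner 𝕜 v w = 0) → W = ⊥) :
    K ≤ K' := by
  set M := K ⊓ K'
  have : CompleteSpace M := (hK.inter hK').completeSpace_coe
  have hMT : Mᗮ ∈ invtSubmodule T.toLinearMap := ContinuousLinearMap.orthogonal_mem_invtSubmodule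
    (by rw [hT.adjoint_eq]; exact (invtSubmodule _).inf_mem hKT hK'T)
  have hW : Mᗮ ⊓ K = ⊥ := h _ ((invtSubmodule _).inf_mem hMT hKT) inf_le_right
    fun w hw => Submodule.inner_right_of_mem_orthogonal (K := M) ⟨hvK, hvK'⟩ hw.1
  have hM := Submodule.sup_orthogonal_inf_of_hasOrthogonalProjection (inf_le_left : M ≤ K)
  rw [hW, sup_bot_eq] at hM
  exact hM ▸ inf_le_right

namespace CubeTail

variable {n : ℕ}

theorem stdVec_apply (w x : CubeTailV n) : stdVec w x = if x = w then 1 else 0 := by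
  rw [stdVec, lp.single_apply, Pi.single_apply]

theorem inner_stdVec_left (w : CubeTailV n) (f : cubeTailSpace n) :
    inner ℂ (stdVec w) f = f w := by
  simp [stdVec, lp.inner_single_left]

theorem tendsto_apply_inr (f : cubeTailSpace n) :
    Tendsto (fun j => f (Sum.inr j)) atTop (𝓝 0) := by
  rw [← Nat.cofinite_eq_atTop]
  exact (lp.tendsto_cofinite_zero (by norm_num) f).comp Sum.inr_injective.tendsto_cofinite

theorem apply_eq_mul_of_eq_smul {A : cubeTailSpace n →L[ℂ] cubeTailSpace n} {f : cubeTailSpace n}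
    {μ : ℂ} (hf : A f = μ • f) (x : CubeTailV n) : A f x = μ * f x := by
  rw [hf, lp.coeFn_smul, Pi.smul_apply, smul_eq_mul]

def neighborFinset (n : ℕ) : CubeTailV n → Finset (CubeTailV n)
  | Sum.inl S => (Finset.univ.image fun i => Sum.inl (symmDiff {i} S)) ∪
      if S = ∅ then {Sum.inr 0} else ∅
  | Sum.inr 0 => {Sum.inl ∅, Sum.inr 1}
  | Sum.inr (j + 1) => {Sum.inr j, Sum.inr (j + 2)}

theorem cubeTailAdj_iff_mem_neighborFinset (x y : CubeTailV n) :
    cubeTailAdj n x y ↔ x ∈ neighborFinset n y := by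
  rcases y with T | _ | j <;> rcases x with S | _ | i <;>
    simp [cubeTailAdj, neighborFinset, Finset.card_symmDiff_eq_one_iff, eq_comm, apply_ite] <;>
    grind

def levelInd (n d : ℕ) : cubeTailSpace n :=
  ∑ S ∈ Finset.univ.filter (fun S : Finset (Fin n) => S.card = d), stdVec (Sum.inl S)

theorem levelInd_apply_inl (d : ℕ) (T : Finset (Fin n)) :
    levelInd n d (Sum.inl T) = if T.card = d then 1 else 0 := by
  rw [levelInd, lp.coeFn_sum, Finset.sum_apply]
  simp [stdVec_apply]

theorem levelInd_apply_inr (d j : ℕ) : levelInd n d (Sum.inr j) = 0 := by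
  rw [levelInd, lp.coeFn_sum, Finset.sum_apply]
  simp [stdVec_apply]

theorem levelInd_zero : levelInd n 0 = stdVec (Sum.inl ∅) := by
  simp [levelInd, Finset.card_eq_zero, Finset.filter_eq']

theorem levelInd_eq_zero_of_lt {d : ℕ} (h : n < d) : levelInd n d = 0 := by
  refine Finset.sum_eq_zero fun S hS => absurd (Finset.mem_filter.mp hS).2 ?_
  have := S.card_le_univ
  simp only [Fintype.card_fin] at this
  omega

def generators (n : ℕ) : Set (cubeTailSpace n) :=
  Set.range (fun d : Fin (n + 1) => levelInd n d) ∪ Set.range fun j => stdVec (Sum.inr j)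

theorem levelInd_mem_span_generators (d : ℕ) : levelInd n d ∈ Submodule.span ℂ (generators n) := by
  rcases le_or_gt d n with h | h
  · exact Submodule.subset_span (Or.inl ⟨⟨d, by omega⟩, rfl⟩)
  · rw [levelInd_eq_zero_of_lt h]
    exact Submodule.zero_mem _

theorem stdVec_inr_mem_span_generators (j : ℕ) :
    stdVec (Sum.inr j : CubeTailV n) ∈ Submodule.span ℂ (generators n) :=
  Submodule.subset_span (Or.inr ⟨j, rfl⟩)

def levelConst (n : ℕ) : Submodule ℂ (cubeTailSpace n) where
  carrier := {f | ∀ S T : Finset (Fin n), S.card = T.card → f (Sum.inl S) = f (Sum.inl T)}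
  add_mem' hf hg S T h := by simp only [lp.coeFn_add, Pi.add_apply, hf S T h, hg S T h]
  zero_mem' _ _ _ := rfl
  smul_mem' c f hf S T h := by simp only [lp.coeFn_smul, Pi.smul_apply, hf S T h]

theorem isClosed_levelConst : IsClosed (levelConst n : Set (cubeTailSpace n)) := by
  have hcont (x : CubeTailV n) : Continuous fun f : cubeTailSpace n => f x :=
    (lp.evalCLM ℂ _ 2 x).continuous
  simp only [levelConst, Submodule.coe_set_mk, AddSubmonoid.coe_set_mk, AddSubsemigroup.coe_set_mk,
    Set.ofPred_forall]
  exact isClosed_iInter fun S => isClosed_iInter fun T => isClosed_iInter fun _ =>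
    isClosed_eq (hcont _) (hcont _)

theorem topologicalClosure_span_generators_le_levelConst :
    (Submodule.span ℂ (generators n)).topologicalClosure ≤ levelConst n := by
  refine Submodule.topologicalClosure_minimal _ (Submodule.span_le.mpr ?_) isClosed_levelConst
  rintro _ (⟨d, rfl⟩ | ⟨j, rfl⟩) S T h
  · simp [levelInd_apply_inl, h]
  · simp [stdVec_apply]

def IsAdjacencyOp (A : cubeTailSpace n →L[ℂ] cubeTailSpace n) : Prop :=
  IsSelfAdjoint A ∧
    ∀ x y : CubeTailV n, inner ℂ (stdVec x) (A (stdVec y)) = if cubeTailAdj n x y then 1 else 0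

namespace IsAdjacencyOp

variable {A : cubeTailSpace n →L[ℂ] cubeTailSpace n} {W : Submodule ℂ (cubeTailSpace n)}
  {f : cubeTailSpace n} {μ : ℂ}

theorem apply_stdVec (hA : IsAdjacencyOp A) (y : CubeTailV n) :
    A (stdVec y) = ∑ x ∈ neighborFinset n y, stdVec x := by
  ext x
  rw [← inner_stdVec_left, hA.2, lp.coeFn_sum, Finset.sum_apply]
  simp [stdVec_apply, cubeTailAdj_iff_mem_neighborFinset]

theorem apply_apply (hA : IsAdjacencyOp A) (f : cubeTailSpace n) (x : CubeTailV n) :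
    A f x = ∑ y ∈ neighborFinset n x, f y := by
  rw [← inner_stdVec_left, ← hA.1.adjoint_eq, ContinuousLinearMap.adjoint_inner_right,
    hA.apply_stdVec, sum_inner]
  simp only [inner_stdVec_left]

theorem apply_inr_zero (hA : IsAdjacencyOp A) (f : cubeTailSpace n) :
    A f (Sum.inr 0) = f (Sum.inl ∅) + f (Sum.inr 1) := by
  rw [hA.apply_apply]
  exact Finset.sum_pair (by simp)

theorem apply_inr_succ (hA : IsAdjacencyOp A) (f : cubeTailSpace n) (j : ℕ) :
    A f (Sum.inr (j + 1)) = f (Sum.inr j) + f (Sum.inr (j + 2)) := by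
  rw [hA.apply_apply]
  exact Finset.sum_pair (by simp)

theorem apply_inl (hA : IsAdjacencyOp A) (f : cubeTailSpace n) (T : Finset (Fin n)) :
    A f (Sum.inl T) = ∑ i ∈ T, f (Sum.inl (T.erase i)) + ∑ i ∈ Tᶜ, f (Sum.inl (insert i T)) +
      if T = ∅ then f (Sum.inr 0) else 0 := by
  have hdisj : Disjoint (Finset.univ.image fun i => (Sum.inl (symmDiff {i} T) : CubeTailV n))
      (if T = ∅ then {Sum.inr 0} else ∅) := by
    split_ifs <;> simp
  have hinj : Function.Injective fun i : Fin n => (Sum.inl (symmDiff {i} T) : CubeTailV n) :=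
    fun i j h => by simpa using Sum.inl_injective h
  rw [hA.apply_apply, neighborFinset, Finset.sum_union hdisj, Finset.sum_image (hinj.injOn),
    ← Finset.sum_add_sum_compl T]
  congr 1
  · congr 1 <;> refine Finset.sum_congr rfl fun i hi => congrArg _ (congrArg _ ?_)
    · exact Finset.singleton_symmDiff_of_mem hi
    · exact Finset.singleton_symmDiff_of_notMem (Finset.mem_compl.mp hi)
  · split_ifs <;> simp

theorem apply_levelInd_zero (hA : IsAdjacencyOp A) :
    A (levelInd n 0) = stdVec (Sum.inr 0) + levelInd n 1 := by
  ext (T | _ | j)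
  · have h₁ : ∀ i ∈ T, levelInd n 0 (Sum.inl (T.erase i)) = if T.card = 1 then 1 else 0 := by
      intro i hi
      have := Finset.card_pos.mpr ⟨i, hi⟩
      rw [levelInd_apply_inl, Finset.card_erase_of_mem hi]
      exact if_congr (by omega) rfl rfl
    have h₂ : ∀ i ∈ Tᶜ, levelInd n 0 (Sum.inl (insert i T)) = 0 := by
      intro i hi
      simp [levelInd_apply_inl, Finset.card_insert_of_notMem (Finset.mem_compl.mp hi)]
    rw [hA.apply_inl, Finset.sum_congr rfl h₁, Finset.sum_congr rfl h₂]
    split_ifs <;> simp_all [levelInd_apply_inl, levelInd_apply_inr, stdVec_apply]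
  · simp [hA.apply_inr_zero, levelInd_apply_inl, levelInd_apply_inr, stdVec_apply]
  · simp [hA.apply_inr_succ, levelInd_apply_inr, stdVec_apply]

theorem apply_levelInd_succ (hA : IsAdjacencyOp A) (d : ℕ) :
    A (levelInd n (d + 1)) =
      ((n - d : ℕ) : ℂ) • levelInd n d + ((d + 2 : ℕ) : ℂ) • levelInd n (d + 2) := by
  ext x
  rw [lp.coeFn_add, Pi.add_apply, lp.coeFn_smul, lp.coeFn_smul, Pi.smul_apply, Pi.smul_apply]
  rcases x with T | _ | j
  · have h₁ : ∀ i ∈ T, levelInd n (d + 1) (Sum.inl (T.erase i)) =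
        if T.card = d + 2 then 1 else 0 := by
      intro i hi
      have := Finset.card_pos.mpr ⟨i, hi⟩
      rw [levelInd_apply_inl, Finset.card_erase_of_mem hi]
      exact if_congr (by omega) rfl rfl
    have h₂ : ∀ i ∈ Tᶜ, levelInd n (d + 1) (Sum.inl (insert i T)) =
        if T.card = d then 1 else 0 := by
      intro i hi
      simp [levelInd_apply_inl, Finset.card_insert_of_notMem (Finset.mem_compl.mp hi)]
    rw [hA.apply_inl, Finset.sum_congr rfl h₁, Finset.sum_congr rfl h₂]
    simp only [Finset.sum_const, Finset.card_compl, Fintype.card_fin, levelInd_apply_inr, ite_self,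
      add_zero, levelInd_apply_inl]
    split_ifs <;> simp_all
  all_goals simp [hA.apply_inr_zero, hA.apply_inr_succ, levelInd_apply_inl, levelInd_apply_inr]

theorem apply_stdVec_inr_zero (hA : IsAdjacencyOp A) :
    A (stdVec (Sum.inr 0)) = levelInd n 0 + stdVec (Sum.inr 1) := by
  rw [hA.apply_stdVec, levelInd_zero]
  exact Finset.sum_pair (by simp)

theorem apply_stdVec_inr_succ (hA : IsAdjacencyOp A) (j : ℕ) :
    A (stdVec (Sum.inr (j + 1))) = stdVec (Sum.inr j) + stdVec (Sum.inr (j + 2)) := by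
  rw [hA.apply_stdVec]
  exact Finset.sum_pair (by simp)

theorem span_generators_mem_invtSubmodule (hA : IsAdjacencyOp A) :
    Submodule.span ℂ (generators n) ∈ invtSubmodule A.toLinearMap := by
  refine (mem_invtSubmodule _).mpr (Submodule.span_le.mpr ?_)
  rintro _ (⟨⟨_ | d, _⟩, rfl⟩ | ⟨_ | j, rfl⟩) <;>
    simp only [SetLike.mem_coe, Submodule.mem_comap, ContinuousLinearMap.coe_coe]
  · rw [hA.apply_levelInd_zero]
    exact add_mem (stdVec_inr_mem_span_generators 0) (levelInd_mem_span_generators 1)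
  · rw [hA.apply_levelInd_succ]
    exact add_mem (Submodule.smul_mem _ _ (levelInd_mem_span_generators d))
      (Submodule.smul_mem _ _ (levelInd_mem_span_generators (d + 2)))
  · rw [hA.apply_stdVec_inr_zero]
    exact add_mem (levelInd_mem_span_generators 0) (stdVec_inr_mem_span_generators 1)
  · rw [hA.apply_stdVec_inr_succ]
    exact add_mem (stdVec_inr_mem_span_generators j) (stdVec_inr_mem_span_generators (j + 2))

theorem eq_zero_of_forall_apply_inl_eq_zero (hA : IsAdjacencyOp A)
    (hW : W ∈ invtSubmodule A.toLinearMap) (hW₀ : ∀ w ∈ W, w (Sum.inl ∅) = 0)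
    {w : cubeTailSpace n} (hw : w ∈ W) (hcube : ∀ S, w (Sum.inl S) = 0) : w = 0 := by
  have hAW : ∀ w ∈ W, A w ∈ W := hW
  have step : ∀ w ∈ W, (∀ S, w (Sum.inl S) = 0) →
      w (Sum.inr 0) = 0 ∧ ∀ S, A w (Sum.inl S) = 0 := by
    intro w hw hcube
    have h₀ : w (Sum.inr 0) = 0 := by simpa [hA.apply_inl, hcube] using hW₀ _ (hAW w hw)
    exact ⟨h₀, fun S => by simp [hA.apply_inl, hcube, h₀]⟩
  have htail : ∀ j, ∀ w ∈ W, (∀ S, w (Sum.inl S) = 0) → w (Sum.inr j) = 0 := by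
    intro j
    induction j using Nat.twoStepInduction with
    | zero => exact fun w hw hcube => (step w hw hcube).1
    | one =>
      intro w hw hcube
      have h := (step _ (hAW w hw) (step w hw hcube).2).1
      rwa [hA.apply_inr_zero, hcube, zero_add] at h
    | more j ih ih₁ =>
      intro w hw hcube
      have h := ih₁ _ (hAW w hw) (step w hw hcube).2
      rwa [hA.apply_inr_succ, ih w hw hcube, zero_add] at h
  ext (S | j)
  exacts [hcube S, htail j w hw hcube]

theorem finiteDimensional (hA : IsAdjacencyOp A) (hW : W ∈ invtSubmodule A.toLinearMap)
    (hW₀ : ∀ w ∈ W, w (Sum.inl ∅) = 0) : FiniteDimensional ℂ W := by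
  let cube : W →ₗ[ℂ] (Finset (Fin n) → ℂ) :=
    LinearMap.pi fun S => (lp.evalₗ _ 2 (Sum.inl S)).comp W.subtype
  refine FiniteDimensional.of_injective cube ?_
  rw [← LinearMap.ker_eq_bot, LinearMap.ker_eq_bot']
  exact fun w hw => Subtype.ext (hA.eq_zero_of_forall_apply_inl_eq_zero hW hW₀ w.2 (congrFun hw))

theorem apply_inr_zero_eq_zero_of_eigen (hA : IsAdjacencyOp A) (hf : A f = μ • f)
    (h₀ : f (Sum.inl ∅) = 0) : f (Sum.inr 0) = 0 := by
  refine eq_zero_of_recurrence_of_tendsto_zero (a := fun j => f (Sum.inr j)) (t := μ) ?_ ?_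
    (tendsto_apply_inr f)
  · simpa [hA.apply_inr_zero, h₀] using apply_eq_mul_of_eq_smul hf (Sum.inr 0)
  · intro j
    simpa [hA.apply_inr_succ] using apply_eq_mul_of_eq_smul hf (Sum.inr (j + 1))

theorem apply_inl_eq_zero_of_eigen (hA : IsAdjacencyOp A) (hf : A f = μ • f)
    (hf_level : f ∈ levelConst n) (h₀ : f (Sum.inl ∅) = 0) (h₁ : f (Sum.inr 0) = 0)
    (S : Finset (Fin n)) : f (Sum.inl S) = 0 := by
  induction hS : S.card using Nat.strong_induction_on generalizing S with
  | _ d ih =>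
  rcases d with _ | d
  · rw [Finset.card_eq_zero.mp hS, h₀]
  obtain ⟨i, hi⟩ : S.Nonempty := Finset.card_pos.mp (by omega)
  set T := S.erase i
  have hT : T.card = d := by rw [Finset.card_erase_of_mem hi, hS]; rfl
  have hdown : ∀ k ∈ T, f (Sum.inl (T.erase k)) = 0 := fun k hk =>
    ih (d - 1) (by omega) _ (by rw [Finset.card_erase_of_mem hk, hT])
  have hup : ∀ k ∈ Tᶜ, f (Sum.inl (insert k T)) = f (Sum.inl S) := fun k hk =>
    hf_level _ _ (by rw [Finset.card_insert_of_notMem (Finset.mem_compl.mp hk), hT, hS])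
  have h := apply_eq_mul_of_eq_smul hf (Sum.inl T)
  rw [hA.apply_inl, ih d (by omega) T hT, mul_zero, Finset.sum_congr rfl hdown,
    Finset.sum_congr rfl hup, Finset.sum_const_zero, Finset.sum_const, zero_add, h₁, ite_self,
    add_zero] at h
  exact (smul_eq_zero.mp h).resolve_left (Finset.card_ne_zero.mpr ⟨i, by simp [T]⟩)

theorem eq_bot_of_le_levelConst (hA : IsAdjacencyOp A) (hW : W ∈ invtSubmodule A.toLinearMap)
    (hW_level : W ≤ levelConst n) (hW₀ : ∀ w ∈ W, w (Sum.inl ∅) = 0) : W = ⊥ := by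
  have := hA.finiteDimensional hW hW₀
  by_contra hne
  have := Submodule.nontrivial_iff_ne_bot.mpr hne
  obtain ⟨μ, hμ⟩ := Module.End.exists_eigenvalue (A.toLinearMap.restrict hW)
  obtain ⟨φ, hφ⟩ := hμ.exists_hasEigenvector
  have hAφ : A φ = μ • (φ : cubeTailSpace n) := congrArg Subtype.val hφ.apply_eq_smul
  have h₀ := hW₀ _ φ.2
  have hcube := hA.apply_inl_eq_zero_of_eigen hAφ (hW_level φ.2) h₀
    (hA.apply_inr_zero_eq_zero_of_eigen hAφ h₀)
  exact hφ.2 (Subtype.ext (hA.eq_zero_of_forall_apply_inl_eq_zero hW hW₀ φ.2 hcube))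

end IsAdjacencyOp

end CubeTail

open CubeTail

theorem cube_tail_walk_module_general (n : ℕ)
    (A : cubeTailSpace n →L[ℂ] cubeTailSpace n) (hsa : IsSelfAdjoint A)
    (hA : ∀ x y : CubeTailV n, (inner ℂ (stdVec x) (A (stdVec y)) : ℂ)
      = if cubeTailAdj n x y then 1 else 0)
    (K : Submodule ℂ (cubeTailSpace n))
    (hK : K = (Submodule.span ℂ
      ((Set.range fun d : Fin (n + 1) =>
          ∑ S ∈ Finset.univ.filter (fun S : Finset (Fin n) => S.card = (d : ℕ)),
            stdVec (Sum.inl S : CubeTailV n)) ∪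
        (Set.range fun j : ℕ => stdVec (Sum.inr j : CubeTailV n)))).topologicalClosure) :
    stdVec (Sum.inl (∅ : Finset (Fin n)) : CubeTailV n) ∈ K ∧
    (∀ x ∈ K, A x ∈ K) ∧
    (∀ K' : Submodule ℂ (cubeTailSpace n), IsClosed (K' : Set (cubeTailSpace n)) →
      (∀ x ∈ K', A x ∈ K') →
      stdVec (Sum.inl (∅ : Finset (Fin n)) : CubeTailV n) ∈ K' → K ≤ K') := by
  have hadj : IsAdjacencyOp A := ⟨hsa, hA⟩
  change K = (Submodule.span ℂ (generators n)).topologicalClosure at hK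
  subst hK
  have hv : stdVec (Sum.inl ∅) ∈ (Submodule.span ℂ (generators n)).topologicalClosure :=
    Submodule.le_topologicalClosure _ (levelInd_zero (n := n) ▸ levelInd_mem_span_generators 0)
  have hinv := Submodule.topologicalClosure_mem_invtSubmodule hadj.span_generators_mem_invtSubmodule
  refine ⟨hv, hinv, fun K' hK' hK'A hvK' => ?_⟩
  refine hsa.le_of_forall_invtSubmodule_eq_bot (Submodule.isClosed_topologicalClosure _) hinv hK'
    hK'A hv hvK' fun W hW hWK hWv => hadj.eq_bot_of_le_levelConst hW
      (hWK.trans topologicalClosure_span_generators_le_levelConst)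
      fun w hw => (inner_stdVec_left _ w).symm.trans (hWv w hw)

/-- For `n ≥ 2`, in the `n`-cube with a tail attached at `∅`, the smallest closed
`A(H_n)`-invariant subspace containing `e_∅` is the closed linear span of
`{𝟙_{W_d} : 0 ≤ d ≤ n} ∪ {e_{q_j} : j ≥ 1}`, where `W_d` is the set of subsets of `[n]`
of cardinality `d`. -/
theorem cube_tail_walk_module (n : ℕ) (hn : 2 ≤ n)
    (A : cubeTailSpace n →L[ℂ] cubeTailSpace n) (hsa : IsSelfAdjoint A)
    (hA : ∀ x y : CubeTailV n, (inner ℂ (stdVec x) (A (stdVec y)) : ℂ)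
      = if cubeTailAdj n x y then 1 else 0)
    (K : Submodule ℂ (cubeTailSpace n))
    (hK : K = (Submodule.span ℂ
      ((Set.range fun d : Fin (n + 1) =>
          ∑ S ∈ Finset.univ.filter (fun S : Finset (Fin n) => S.card = (d : ℕ)),
            stdVec (Sum.inl S : CubeTailV n)) ∪
        (Set.range fun j : ℕ => stdVec (Sum.inr j : CubeTailV n)))).topologicalClosure) :
    stdVec (Sum.inl (∅ : Finset (Fin n)) : CubeTailV n) ∈ K ∧
    (∀ x ∈ K, A x ∈ K) ∧
    (∀ K' : Submodule ℂ (cubeTailSpace n), IsClosed (K' : Set (cubeTailSpace n)) →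
      (∀ x ∈ K', A x ∈ K') →
      stdVec (Sum.inl (∅ : Finset (Fin n)) : CubeTailV n) ∈ K' → K ≤ K') :=
  cube_tail_walk_module_general n A hsa hA K hK
end
end

section
/- For n ≥ 2, let H_n be the graph obtained from the n-cube Q_n by attaching a one-way infinite path at the vertex ∅, let ζ = exp(2πi/n), and define the unit vectors ψ = n^{−1/2} Σ_{j=1}^{n} ζ^{j−1} e_{{j}} and ψ' = n^{−1/2} Σ_{j=1}^{n} ζ^{j−1} e_{[n]∖{j}} in ℓ²(V(H_n)). Then H_n has perfect state transfer between ψ and ψ' at time π/2: |⟨ψ', e^{−i(π/2)A(H_n)} ψ⟩| = 1. -/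
/-!
Write `χ_T(S) = (-1)^{|S ∩ T|}` for the characters of the cube and `f(T) = ∑_{j ∈ T} a_j`
for coefficients with `∑_j a_j = 0` (here `a_j = ζ^j`). On a vector `c` supported on the cube,
`A` acts as the adjacency operator of the cube plus a leak `c(∅) e_{q_1}` into the tail.
The layers `u_m = ∑_{|T| = m} f(T) χ_T` vanish at `∅`, because every `j` lies in equally many
`m`-sets, so they are eigenvectors of `A` with eigenvalue `n - 2m`, and `e^{-iπA/2}` multiplies
`u_m` by `(-i)^n (-1)^m`. The Walsh transform of `f` lives on singletons:
`∑_m u_m = -2^{n-1} ∑_j a_j e_{{j}}`, and since `(-1)^{|T|} χ_T(S) = χ_T(Sᶜ)`, also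
`∑_m (-1)^m u_m = -2^{n-1} ∑_j a_j e_{[n]∖{j}}`. Hence `e^{-iπA/2} ψ = (-i)^n ψ'`.
-/

noncomputable section

open scoped Classical

/-- `ζ = exp(2πi/n)`. -/
def zetaC (n : ℕ) : ℂ := Complex.exp (2 * Real.pi * Complex.I / n)

open Finset
open scoped symmDiff

lemma sum_ite_card_symmDiff_eq_one {α M : Type*} [Fintype α] [DecidableEq α] [AddCommMonoid M]
    (S : Finset α) (g : Finset α → M) :
    ∑ S', (if #(S ∆ S') = 1 then g S' else 0) = ∑ i, g (S ∆ {i}) := by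
  have hsingletons : ({D | #D = 1} : Finset (Finset α)) = powersetCard 1 univ := by
    ext D
    simp
  rw [← Equiv.sum_comp (symmDiff_right_involutive S).toPerm]
  simp only [Function.Involutive.coe_toPerm, symmDiff_symmDiff_cancel_left]
  rw [← sum_filter, hsingletons, powersetCard_one, sum_map]
  rfl

section Walsh

variable {α : Type*} [DecidableEq α]

def walsh (S T : Finset α) : ℂ := (-1) ^ #(S ∩ T)

lemma walsh_eq_prod (S T : Finset α) : walsh S T = ∏ i ∈ T, if i ∈ S then -1 else 1 := by
  rw [prod_ite_mem, prod_const, walsh, inter_comm]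

lemma walsh_symmDiff (S S' T : Finset α) : walsh (S ∆ S') T = walsh S T * walsh S' T := by
  simp only [walsh_eq_prod, ← prod_mul_distrib, mem_symmDiff]
  refine prod_congr rfl fun i _ => ?_
  by_cases hS : i ∈ S <;> by_cases hS' : i ∈ S' <;> simp [hS, hS']

lemma walsh_singleton_left (i : α) (T : Finset α) :
    walsh {i} T = if i ∈ T then -1 else 1 := by
  by_cases hi : i ∈ T <;> simp [walsh, hi]

variable [Fintype α]

lemma walsh_compl_left (S T : Finset α) : walsh Sᶜ T = (-1) ^ #T * walsh S T := by
  have h : Sᶜ = univ ∆ S := by ext; simp [mem_symmDiff]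
  rw [h, walsh_symmDiff, walsh, univ_inter]

lemma sum_walsh (S : Finset α) :
    ∑ T, walsh S T = if S = ∅ then 2 ^ Fintype.card α else 0 := by
  simp only [walsh_eq_prod, ← powerset_univ, ← prod_one_add]
  split_ifs with hS
  · simp [hS, one_add_one_eq_two]
  · obtain ⟨i, hi⟩ := nonempty_iff_ne_empty.mpr hS
    exact prod_eq_zero (mem_univ i) (by simp [hi])

lemma sum_walsh_symmDiff_singleton (S T : Finset α) :
    ∑ i, walsh (S ∆ {i}) T = (Fintype.card α - 2 * #T) * walsh S T := by
  have h : ∑ i : α, (if i ∈ T then (-1 : ℂ) else 1) = Fintype.card α - 2 * #T := by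
    rw [sum_ite, sum_const, sum_const, filter_not, filter_mem_eq_inter, univ_inter,
      ← compl_eq_univ_sdiff, card_compl]
    simp [Nat.cast_sub (card_le_univ T)]
    ring
  simp only [walsh_symmDiff, walsh_singleton_left, ← mul_sum, h, mul_comm]

lemma sum_ite_mem_walsh (j : α) (S : Finset α) :
    ∑ T, (if j ∈ T then walsh S T else 0)
      = 2 ^ (Fintype.card α - 1) * ((if S = ∅ then 1 else 0) - if S = {j} then 1 else 0) := by
  have hind : ∀ T : Finset α, (if j ∈ T then walsh S T else 0)
      = (walsh S T - walsh (S ∆ {j}) T) / 2 := by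
    intro T
    by_cases hj : j ∈ T <;> simp [walsh_symmDiff, walsh_singleton_left, hj]
  have hcard : 2 ^ Fintype.card α = (2 : ℂ) * 2 ^ (Fintype.card α - 1) := by
    rw [← pow_succ', Nat.sub_add_cancel (Fintype.card_pos_iff.mpr ⟨j⟩)]
  have hS : S ∆ {j} = ∅ ↔ S = {j} := symmDiff_eq_bot
  simp only [hind, ← sum_div, sum_sub_distrib, sum_walsh, hS]
  rw [hcard]
  split_ifs <;> ring

lemma sum_sum_mul_walsh (a : α → ℂ) (ha : ∑ j, a j = 0) (S : Finset α) :
    ∑ T, (∑ j ∈ T, a j) * walsh S T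
      = -2 ^ (Fintype.card α - 1) * ∑ j, if S = {j} then a j else 0 := by
  have hexpand : ∀ T : Finset α, (∑ j ∈ T, a j) * walsh S T
      = ∑ j, a j * if j ∈ T then walsh S T else 0 := by
    intro T
    simp [mul_ite, sum_mul]
  simp only [hexpand]
  rw [sum_comm]
  simp only [← mul_sum, sum_ite_mem_walsh]
  set c : ℂ := 2 ^ (Fintype.card α - 1)
  have hsplit : ∀ j, a j * (c * ((if S = ∅ then 1 else 0) - if S = {j} then 1 else 0))
      = c * (if S = ∅ then 1 else 0) * a j - c * if S = {j} then a j else 0 := by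
    intro j
    split_ifs <;> ring
  rw [sum_congr rfl fun j _ => hsplit j, sum_sub_distrib, ← mul_sum, ← mul_sum, ha]
  ring

def walshLayer (a : α → ℂ) (m : ℕ) (S : Finset α) : ℂ :=
  ∑ T ∈ powersetCard m univ, (∑ j ∈ T, a j) * walsh S T

lemma sum_walshLayer_symmDiff_singleton (a : α → ℂ) (m : ℕ) (S : Finset α) :
    ∑ i, walshLayer a m (S ∆ {i}) = (Fintype.card α - 2 * m) * walshLayer a m S := by
  simp only [walshLayer, mul_sum]
  rw [sum_comm]
  refine sum_congr rfl fun T hT => ?_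
  rw [← mul_sum, sum_walsh_symmDiff_singleton, (mem_powersetCard.mp hT).2]
  ring

lemma walshLayer_compl (a : α → ℂ) (m : ℕ) (S : Finset α) :
    walshLayer a m Sᶜ = (-1) ^ m * walshLayer a m S := by
  simp only [walshLayer, mul_sum]
  refine sum_congr rfl fun T hT => ?_
  rw [walsh_compl_left, (mem_powersetCard.mp hT).2]
  ring

lemma walshLayer_empty (a : α → ℂ) (ha : ∑ j, a j = 0) (m : ℕ) :
    walshLayer a m ∅ = 0 := by
  rcases m with - | m
  · simp [walshLayer]
  have hcount : ∀ j : α, #{T ∈ powersetCard (m + 1) univ | j ∈ T}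
      = (Fintype.card α - 1).choose m := by
    intro j
    simpa using card_filter_powersetCard_subset {j} univ (m + 1) (subset_univ _) (by simp)
  have hswap : ∑ T ∈ powersetCard (m + 1) univ, ∑ j ∈ T, a j
      = ∑ j, #{T ∈ powersetCard (m + 1) univ | j ∈ T} * a j := by
    rw [sum_comm' (t' := univ) (s' := fun j => {T ∈ powersetCard (m + 1) univ | j ∈ T})
      (by simp)]
    simp
  simp [walshLayer, walsh, hswap, hcount, ← mul_sum, ha]

lemma sum_walshLayer (a : α → ℂ) (S : Finset α) :
    ∑ m ∈ range (Fintype.card α + 1), walshLayer a m S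
      = ∑ T, (∑ j ∈ T, a j) * walsh S T := by
  rw [← powerset_univ, sum_powerset, card_univ]
  rfl

end Walsh

lemma exp_apply_of_apply_eq_smul {E : Type*} [NormedAddCommGroup E] [NormedSpace ℂ E]
    [CompleteSpace E] (T : E →L[ℂ] E) {μ : ℂ} {v : E} (h : T v = μ • v) :
    NormedSpace.exp T v = Complex.exp μ • v := by
  have hpow : ∀ k : ℕ, (T ^ k) v = μ ^ k • v := by
    intro k
    induction k with
    | zero => simp
    | succ k ih => rw [pow_succ', mul_apply_eq_comp, ih, map_smul, h, smul_smul, pow_succ]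
  have hT := (NormedSpace.exp_series_hasSum_exp' (𝕂 := ℂ) T).mapL
    (ContinuousLinearMap.apply ℂ E v)
  have hμ := (NormedSpace.exp_series_hasSum_exp' (𝕂 := ℂ) μ).smul_const v
  rw [Complex.exp_eq_exp_ℂ]
  refine hT.unique ?_
  simpa [hpow, smul_smul] using hμ

lemma Orthonormal.norm_sum_smul_of_norm_eq_one {𝕜 ι E : Type*} [RCLike 𝕜] [Fintype ι]
    [NormedAddCommGroup E] [InnerProductSpace 𝕜 E] {e : ι → E} (he : Orthonormal 𝕜 e)
    {c : ι → 𝕜} (hc : ∀ i, ‖c i‖ = 1) :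
    ‖∑ i, c i • e i‖ = √(Fintype.card ι) := by
  have h : ‖∑ i, c i • e i‖ ^ 2 = Fintype.card ι := by
    rw [@norm_sq_eq_re_inner 𝕜, he.inner_sum]
    simp [RCLike.conj_mul, hc]
  rw [← h, Real.sqrt_sq (norm_nonneg _)]

section CubeTail

variable {n : ℕ}

lemma inner_stdVec_left (x : CubeTailV n) (v : cubeTailSpace n) :
    inner ℂ (stdVec x) v = v x := by
  simp [stdVec, lp.inner_single_left]

lemma orthonormal_stdVec : Orthonormal ℂ (stdVec : CubeTailV n → cubeTailSpace n) := by
  rw [orthonormal_iff_ite]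
  intro x y
  rw [inner_stdVec_left]
  simp [stdVec, Pi.single_apply]

variable (n) in
def cubeVec : (Finset (Fin n) → ℂ) →ₗ[ℂ] cubeTailSpace n :=
  Fintype.linearCombination ℂ fun S => stdVec (Sum.inl S)

lemma cubeVec_apply_inl (c : Finset (Fin n) → ℂ) (S : Finset (Fin n)) :
    cubeVec n c (Sum.inl S) = c S := by
  rw [cubeVec, Fintype.linearCombination_apply, lp.coeFn_sum, Finset.sum_apply]
  simp [stdVec, Pi.single_apply]

lemma cubeVec_apply_inr (c : Finset (Fin n) → ℂ) (k : ℕ) :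
    cubeVec n c (Sum.inr k) = 0 := by
  rw [cubeVec, Fintype.linearCombination_apply, lp.coeFn_sum, Finset.sum_apply]
  simp [stdVec]

lemma cubeVec_sum_ite {ι : Type*} [Fintype ι] (U : ι → Finset (Fin n)) (a : ι → ℂ) :
    cubeVec n (fun S => ∑ j, if S = U j then a j else 0)
      = ∑ j, a j • stdVec (Sum.inl (U j)) := by
  have h : (fun S => ∑ j, if S = U j then a j else 0) = ∑ j, Pi.single (U j) (a j) := by
    ext S
    simp [Pi.single_apply]
  simp [h, cubeVec, map_sum]

lemma cubeTailAdj_inl_inl (S T : Finset (Fin n)) :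
    cubeTailAdj n (Sum.inl S) (Sum.inl T) ↔ #(S ∆ T) = 1 := by
  simp [cubeTailAdj]

lemma cubeTailAdj_inr_inl (k : ℕ) (S : Finset (Fin n)) :
    cubeTailAdj n (Sum.inr k) (Sum.inl S) ↔ k = 0 ∧ S = ∅ := by
  simp [cubeTailAdj, and_comm, eq_comm]

variable (A : cubeTailSpace n →L[ℂ] cubeTailSpace n)
  (hA : ∀ x y : CubeTailV n,
    inner ℂ (stdVec x) (A (stdVec y)) = if cubeTailAdj n x y then 1 else 0)
include hA

lemma apply_cubeVec (c : Finset (Fin n) → ℂ) :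
    A (cubeVec n c) = cubeVec n (fun S => ∑ i, c (S ∆ {i})) + c ∅ • stdVec (Sum.inr 0) := by
  ext x
  have hcoord :
      A (cubeVec n c) x = ∑ S, c S * if cubeTailAdj n x (Sum.inl S) then 1 else 0 := by
    rw [← inner_stdVec_left, cubeVec, Fintype.linearCombination_apply, map_sum, inner_sum]
    simp [inner_smul_right, hA]
  rw [hcoord, lp.coeFn_add, Pi.add_apply, lp.coeFn_smul, Pi.smul_apply]
  rcases x with S | k
  · simp [cubeTailAdj_inl_inl, sum_ite_card_symmDiff_eq_one, cubeVec_apply_inl, stdVec]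
  · by_cases hk : k = 0 <;> simp [cubeTailAdj_inr_inl, cubeVec_apply_inr, stdVec, hk]

lemma apply_cubeVec_walshLayer (a : Fin n → ℂ) (ha : ∑ j, a j = 0) (m : ℕ) :
    A (cubeVec n (walshLayer a m)) = ((n : ℂ) - 2 * m) • cubeVec n (walshLayer a m) := by
  rw [apply_cubeVec A hA, walshLayer_empty a ha, zero_smul, add_zero, ← map_smul]
  congr 1
  ext S
  simp [sum_walshLayer_symmDiff_singleton]

lemma exp_apply_cubeVec_walshLayer (a : Fin n → ℂ) (ha : ∑ j, a j = 0) (m : ℕ) :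
    NormedSpace.exp ((-((Real.pi : ℂ) / 2) * Complex.I) • A) (cubeVec n (walshLayer a m))
      = ((-Complex.I) ^ n * (-1) ^ m) • cubeVec n (walshLayer a m) := by
  rw [exp_apply_of_apply_eq_smul _ (by
    rw [smul_apply, apply_cubeVec_walshLayer A hA a ha, smul_smul])]
  have h : -((Real.pi : ℂ) / 2) * Complex.I * (n - 2 * m)
      = n * (-Real.pi / 2 * Complex.I) + m * (Real.pi * Complex.I) := by ring
  rw [h, Complex.exp_add, Complex.exp_nat_mul, Complex.exp_nat_mul, Complex.exp_pi_mul_I,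
    Complex.exp_neg_pi_div_two_mul_I]

theorem exp_apply_sum_smul_singletons (a : Fin n → ℂ) (ha : ∑ j, a j = 0) :
    NormedSpace.exp ((-((Real.pi : ℂ) / 2) * Complex.I) • A)
        (∑ j, a j • stdVec (Sum.inl {j}))
      = (-Complex.I) ^ n • ∑ j, a j • stdVec (Sum.inl {j}ᶜ) := by
  set v : ℕ → cubeTailSpace n := fun m => cubeVec n (walshLayer a m)
  have hc : (-(2 : ℂ) ^ (n - 1)) ≠ 0 := by simp
  have hsum : ∑ m ∈ range (n + 1), v m
      = (-(2 : ℂ) ^ (n - 1)) • ∑ j, a j • stdVec (Sum.inl {j}) := by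
    rw [← cubeVec_sum_ite, ← map_sum, ← map_smul]
    congr 1
    ext S
    have h := sum_walshLayer a S
    rw [sum_sum_mul_walsh a ha, Fintype.card_fin] at h
    simpa using h
  have hsum' : ∑ m ∈ range (n + 1), (-1 : ℂ) ^ m • v m
      = (-(2 : ℂ) ^ (n - 1)) • ∑ j, a j • stdVec (Sum.inl {j}ᶜ) := by
    simp only [v, ← map_smul, ← map_sum, ← cubeVec_sum_ite]
    congr 1
    ext S
    have h := sum_walshLayer a Sᶜ
    rw [sum_sum_mul_walsh a ha, Fintype.card_fin] at h
    simpa [walshLayer_compl, eq_compl_comm, eq_comm (a := Sᶜ)] using h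
  calc _ = NormedSpace.exp ((-((Real.pi : ℂ) / 2) * Complex.I) • A)
          ((-(2 : ℂ) ^ (n - 1))⁻¹ • ∑ m ∈ range (n + 1), v m) := by
        rw [hsum, inv_smul_smul₀ hc]
    _ = (-(2 : ℂ) ^ (n - 1))⁻¹ •
          ∑ m ∈ range (n + 1), ((-Complex.I) ^ n * (-1) ^ m) • v m := by
        rw [map_smul, map_sum]
        simp only [v, exp_apply_cubeVec_walshLayer A hA a ha]
    _ = (-(2 : ℂ) ^ (n - 1))⁻¹ • (-Complex.I) ^ n •
          ∑ m ∈ range (n + 1), (-1 : ℂ) ^ m • v m := by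
        simp only [mul_smul, ← smul_sum]
    _ = _ := by rw [smul_comm, hsum', inv_smul_smul₀ hc]

end CubeTail

theorem cube_tail_pst_general (n : ℕ) (hn : 2 ≤ n)
    (A : cubeTailSpace n →L[ℂ] cubeTailSpace n)
    (hA : ∀ x y : CubeTailV n, (inner ℂ (stdVec x) (A (stdVec y)) : ℂ)
      = if cubeTailAdj n x y then 1 else 0)
    (ψ ψ' : cubeTailSpace n)
    (hψ : ψ = ((Real.sqrt n : ℂ))⁻¹ •
      ∑ j : Fin n, zetaC n ^ (j : ℕ) • stdVec (Sum.inl ({j} : Finset (Fin n)) : CubeTailV n))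
    (hψ' : ψ' = ((Real.sqrt n : ℂ))⁻¹ •
      ∑ j : Fin n, zetaC n ^ (j : ℕ) •
        stdVec (Sum.inl (({j} : Finset (Fin n))ᶜ) : CubeTailV n)) :
    ‖(inner ℂ ψ' (NormedSpace.exp ((-((Real.pi : ℂ) / 2) * Complex.I) • A) ψ))‖ = 1 := by
  have hζ : IsPrimitiveRoot (zetaC n) n := Complex.isPrimitiveRoot_exp n (by omega)
  have hsum : ∑ j : Fin n, zetaC n ^ (j : ℕ) = 0 := by
    rw [Fin.sum_univ_eq_sum_range (zetaC n ^ ·)]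
    exact hζ.geom_sum_eq_zero (by omega)
  have hexp : NormedSpace.exp ((-((Real.pi : ℂ) / 2) * Complex.I) • A) ψ
      = (-Complex.I) ^ n • ψ' := by
    rw [hψ, hψ', map_smul, exp_apply_sum_smul_singletons A hA _ hsum, smul_comm]
  have hon : Orthonormal ℂ fun j : Fin n => stdVec (Sum.inl {j}ᶜ : CubeTailV n) :=
    orthonormal_stdVec.comp _ fun i j h => by simpa using h
  have hnorm : ‖ψ'‖ = 1 := by
    rw [hψ', norm_smul,
      hon.norm_sum_smul_of_norm_eq_one (by simp [hζ.norm'_eq_one (by omega)])]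
    have : (0 : ℝ) < √n := Real.sqrt_pos.mpr (by exact_mod_cast (by omega : 0 < n))
    simp [abs_of_pos this, this.ne']
  rw [hexp, inner_smul_right, inner_self_eq_norm_sq_to_K, hnorm]
  simp

/-- For `n ≥ 2`, the `n`-cube with a tail attached at `∅` has perfect state transfer at
time `π/2` between `ψ = n^{-1/2} ∑_{j=1}^n ζ^{j-1} e_{{j}}` and
`ψ' = n^{-1/2} ∑_{j=1}^n ζ^{j-1} e_{[n]∖{j}}`  (here `j : Fin n` plays the role of
`j + 1 ∈ [n]`):  `|⟨ψ', e^{-i(π/2)A(H_n)} ψ⟩| = 1`. -/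
theorem cube_tail_pst (n : ℕ) (hn : 2 ≤ n)
    (A : cubeTailSpace n →L[ℂ] cubeTailSpace n) (hsa : IsSelfAdjoint A)
    (hA : ∀ x y : CubeTailV n, (inner ℂ (stdVec x) (A (stdVec y)) : ℂ)
      = if cubeTailAdj n x y then 1 else 0)
    (ψ ψ' : cubeTailSpace n)
    (hψ : ψ = ((Real.sqrt n : ℂ))⁻¹ •
      ∑ j : Fin n, zetaC n ^ (j : ℕ) • stdVec (Sum.inl ({j} : Finset (Fin n)) : CubeTailV n))
    (hψ' : ψ' = ((Real.sqrt n : ℂ))⁻¹ •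
      ∑ j : Fin n, zetaC n ^ (j : ℕ) •
        stdVec (Sum.inl (({j} : Finset (Fin n))ᶜ) : CubeTailV n)) :
    ‖(inner ℂ ψ' (NormedSpace.exp ((-((Real.pi : ℂ) / 2) * Complex.I) • A) ψ))‖ = 1 :=
  cube_tail_pst_general n hn A hA ψ ψ' hψ hψ'
end
end
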